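/- Let η : ℝ^d → (0,∞) be continuous and bounded, and let x : [0,T] → ℝ^d be C². Suppose |ẍ(t) + η(x(t)) ẋ(t)| ≤ M for all t ∈ [0,T]. Then for all t ∈ [0,T], |x(t)| ≤ |x(0)| + t|ẋ(0)| + (1/2) M t². -/

import Mathlib

/-! The damping only slows the motion down: with `v = ẋ` and `η ≥ 0`,
`⟪v, v̇⟫ = ⟪v, v̇ + η v⟫ - η ‖v‖² ≤ M ‖v‖`, so `‖v‖²` grows no faster than `(‖v(0)‖ + M t)²`, and a
barrier argument gives `‖ẋ(t)‖ ≤ ‖ẋ(0)‖ + M t`. Integrating this speed bound once more gives the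
quadratic bound on `‖x(t)‖`. -/

open Set Filter Topology

open scoped RealInnerProductSpace

section

variable {E : Type*} [NormedAddCommGroup E] [InnerProductSpace ℝ E]

theorem inner_le_of_norm_add_smul_le {v w : E} {c M : ℝ} (hc : 0 ≤ c) (h : ‖w + c • v‖ ≤ M) :
    ⟪v, w⟫ ≤ M * ‖v‖ := by
  have hsplit : ⟪v, w⟫ = ⟪v, w + c • v⟫ - c * ‖v‖ ^ 2 := by
    rw [inner_add_right, real_inner_smul_right, real_inner_self_eq_norm_sq]
    ring
  calc ⟪v, w⟫ ≤ ⟪v, w + c • v⟫ := hsplit ▸ sub_le_self _ (by positivity)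
    _ ≤ ‖v‖ * ‖w + c • v‖ := real_inner_le_norm _ _
    _ ≤ M * ‖v‖ := by rw [mul_comm]; gcongr

-- The slack `ε` makes the barrier strictly steeper wherever `‖v‖` touches it.
theorem norm_le_add_add_mul_of_inner_deriv_le {v v' : ℝ → E} {a b M ε : ℝ} (hM : 0 ≤ M)
    (hε : 0 < ε) (hv : ContinuousOn v (Icc a b))
    (hv' : ∀ t ∈ Ico a b, HasDerivWithinAt v (v' t) (Ici t) t)
    (hbound : ∀ t ∈ Ico a b, ⟪v t, v' t⟫ ≤ M * ‖v t‖) :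
    ∀ t ∈ Icc a b, ‖v t‖ ≤ ‖v a‖ + ε + (M + ε) * (t - a) := by
  have hR : ∀ t, HasDerivAt (fun s ↦ ‖v a‖ + ε + (M + ε) * (s - a)) (M + ε) t := fun t ↦ by
    simpa using (((hasDerivAt_id' t).sub_const a).const_mul (M + ε)).const_add (‖v a‖ + ε)
  have hR_pos : ∀ t ∈ Icc a b, 0 < ‖v a‖ + ε + (M + ε) * (t - a) := fun t ht ↦ by
    have := mul_nonneg (add_nonneg hM hε.le) (sub_nonneg.2 ht.1)
    positivity
  have hsq : ∀ t ∈ Icc a b, ‖v t‖ ^ 2 ≤ (‖v a‖ + ε + (M + ε) * (t - a)) ^ 2 := by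
    have hstart : ‖v a‖ ^ 2 ≤ (‖v a‖ + ε + (M + ε) * (a - a)) ^ 2 := by
      rw [sub_self, mul_zero, add_zero]
      gcongr
      linarith
    refine image_le_of_deriv_right_lt_deriv_boundary (hv.norm.pow 2)
      (fun t ht ↦ (hv' t ht).norm_sq) hstart (fun t ↦ (hR t).pow 2) fun t ht heq ↦ ?_
    have hpos := hR_pos t (Ico_subset_Icc_self ht)
    have hnorm := (pow_left_inj₀ (norm_nonneg _) hpos.le two_ne_zero).1 heq
    have := hbound t ht
    rw [hnorm] at this
    norm_num
    nlinarith [mul_pos hε hpos]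
  exact fun t ht ↦ (pow_le_pow_iff_left₀ (norm_nonneg _) (hR_pos t ht).le two_ne_zero).1 (hsq t ht)

theorem norm_le_add_mul_of_inner_deriv_le {v v' : ℝ → E} {a b M : ℝ} (hM : 0 ≤ M)
    (hv : ContinuousOn v (Icc a b))
    (hv' : ∀ t ∈ Ico a b, HasDerivWithinAt v (v' t) (Ici t) t)
    (hbound : ∀ t ∈ Ico a b, ⟪v t, v' t⟫ ≤ M * ‖v t‖) :
    ∀ t ∈ Icc a b, ‖v t‖ ≤ ‖v a‖ + M * (t - a) := by
  intro t ht
  have hlim : Tendsto (fun ε ↦ ‖v a‖ + ε + (M + ε) * (t - a)) (𝓝[>] 0)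
      (𝓝 (‖v a‖ + 0 + (M + 0) * (t - a))) :=
    ((by fun_prop : Continuous fun ε : ℝ ↦ ‖v a‖ + ε + (M + ε) * (t - a)).tendsto 0).mono_left
      nhdsWithin_le_nhds
  simpa using ge_of_tendsto hlim (eventually_nhdsWithin_of_forall fun ε hε ↦
    norm_le_add_add_mul_of_inner_deriv_le hM hε hv hv' hbound t ht)

theorem norm_le_of_norm_deriv_le_add_mul {f f' : ℝ → E} {a b c M : ℝ}
    (hf : ContinuousOn f (Icc a b))
    (hf' : ∀ t ∈ Ico a b, HasDerivWithinAt f (f' t) (Ici t) t)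
    (hbound : ∀ t ∈ Ico a b, ‖f' t‖ ≤ c + M * (t - a)) :
    ∀ t ∈ Icc a b, ‖f t‖ ≤ ‖f a‖ + c * (t - a) + M / 2 * (t - a) ^ 2 := by
  have hB : ∀ t, HasDerivAt (fun s ↦ ‖f a‖ + c * (s - a) + M / 2 * (s - a) ^ 2)
      (c + M * (t - a)) t := fun t ↦ by
    have hlin := ((hasDerivAt_id' t).sub_const a).const_mul c
    have hquad := (((hasDerivAt_id' t).sub_const a).pow 2).const_mul (M / 2)
    exact ((hlin.const_add ‖f a‖).add hquad).congr_deriv (by norm_num; ring)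
  exact image_norm_le_of_norm_deriv_right_le_deriv_boundary hf hf' (by simp) hB hbound

end

theorem motion_map_bound_general {d : ℕ} (T M : ℝ) (hT : 0 ≤ T)
    (η : EuclideanSpace ℝ (Fin d) → ℝ)
    (hηpos : ∀ y, 0 < η y)
    (x : ℝ → EuclideanSpace ℝ (Fin d)) (hx : ContDiff ℝ 2 x)
    (hM : ∀ t ∈ Set.Icc (0 : ℝ) T, ‖deriv (deriv x) t + η (x t) • deriv x t‖ ≤ M) :
    ∀ t ∈ Set.Icc (0 : ℝ) T,
      ‖x t‖ ≤ ‖x 0‖ + t * ‖deriv x 0‖ + (1 / 2) * M * t ^ 2 := by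
  have hM0 : 0 ≤ M := (norm_nonneg _).trans (hM 0 ⟨le_rfl, hT⟩)
  have hv : ContDiff ℝ 1 (deriv x) := hx.iterate_deriv' 1 1
  have hspeed : ∀ t ∈ Icc 0 T, ‖deriv x t‖ ≤ ‖deriv x 0‖ + M * (t - 0) :=
    norm_le_add_mul_of_inner_deriv_le hM0 hv.continuous.continuousOn
      (fun t _ ↦ ((hv.differentiable one_ne_zero) t).hasDerivAt.hasDerivWithinAt)
      (fun t ht ↦ inner_le_of_norm_add_smul_le (hηpos _).le (hM t (Ico_subset_Icc_self ht)))
  intro t ht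
  have := norm_le_of_norm_deriv_le_add_mul hx.continuous.continuousOn
    (fun s _ ↦ ((hx.differentiable two_ne_zero) s).hasDerivAt.hasDerivWithinAt)
    (fun s hs ↦ hspeed s (Ico_subset_Icc_self hs)) t ht
  simp only [sub_zero] at this
  linarith

/-- Integrating-factor estimate: if `ẍ + η(x)ẋ` is bounded by `M` on `[0,T]`, with `η`
continuous, positive and bounded, then `|x(t)| ≤ |x(0)| + t|ẋ(0)| + M t²/2`. -/
theorem motion_map_bound {d : ℕ} (T M Cη : ℝ) (hT : 0 ≤ T)
    (η : EuclideanSpace ℝ (Fin d) → ℝ) (hηc : Continuous η)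
    (hηpos : ∀ y, 0 < η y) (hηbd : ∀ y, η y ≤ Cη)
    (x : ℝ → EuclideanSpace ℝ (Fin d)) (hx : ContDiff ℝ 2 x)
    (hM : ∀ t ∈ Set.Icc (0 : ℝ) T, ‖deriv (deriv x) t + η (x t) • deriv x t‖ ≤ M) :
    ∀ t ∈ Set.Icc (0 : ℝ) T,
      ‖x t‖ ≤ ‖x 0‖ + t * ‖deriv x 0‖ + (1 / 2) * M * t ^ 2 :=
  motion_map_bound_general T M hT η hηpos x hx hM
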